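/- Let d ≥ 3 and p > 0 with d - 2 - 2/p ≤ 0 (the critical or subcritical case, with d - 2 - 1/p > 0). Then there is no nontrivial C² solution h : [0,∞) → ℝ of h'' + (d - 2 - 2/p) h' - (1/p)(d - 2 - 1/p) h + h^{2p+1} = 0 with h(0) = 0, h(s), h'(s) → 0 as s → ∞, and h'(s)² integrable on [0,∞). Equivalently, every such solution satisfies h ≡ 0. -/

import Mathlib

open Real MeasureTheory

open Filter Set Topology

/-! The equation is a damped nonlinear oscillator `h'' = -a h' - V'(h)` with damping coefficient
`a = d - 2 - 2/p ≤ 0`, so the energy `h'²/2 + V(h)` is nondecreasing along the solution. It tends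
to `0` at infinity and equals `h'(0)²/2` at the origin, hence `h'(0) = 0`. With `h(0) = h'(0) = 0`,
Grönwall's inequality applied to `(h, h')` on each compact interval `[0, s]`, where the nonlinearity
is bounded by a linear term, forces `h ≡ 0`. -/

noncomputable def potential (b p x : ℝ) : ℝ :=
  -(b * x ^ 2 / 2) + (x ^ 2) ^ (p + 1) / (2 * p + 2)

noncomputable def energy (b p : ℝ) (h h' : ℝ → ℝ) (t : ℝ) : ℝ :=
  h' t ^ 2 / 2 + potential b p (h t)

section Energy

variable {a b p : ℝ}

theorem hasDerivAt_potential (hp : 0 ≤ p) (x : ℝ) :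
    HasDerivAt (potential b p) (-b * x + |x| ^ (2 * p) * x) x := by
  have hpow : HasDerivAt (fun y : ℝ => y ^ 2) (2 * x) x := by
    simpa using hasDerivAt_pow 2 x
  have hrpow := (hpow.rpow_const (p := p + 1) (Or.inr (by linarith))).div_const (2 * p + 2)
  have hsq : (x ^ 2) ^ p = |x| ^ (2 * p) := by
    rw [← sq_abs, ← rpow_natCast, ← rpow_mul (abs_nonneg x)]
    norm_num
  refine (((hpow.const_mul b).div_const 2).neg.add hrpow).congr_deriv ?_
  rw [add_sub_cancel_right, hsq]
  field_simp

theorem potential_zero (hp : 0 ≤ p) : potential b p 0 = 0 := by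
  simp [potential, zero_rpow (by linarith : p + 1 ≠ 0)]

theorem hasDerivAt_energy (hp : 0 ≤ p) {h h' h'' : ℝ → ℝ} {s : ℝ}
    (hder1 : HasDerivAt h (h' s) s) (hder2 : HasDerivAt h' (h'' s) s)
    (heq : h'' s + a * h' s - b * h s + |h s| ^ (2 * p) * h s = 0) :
    HasDerivAt (energy b p h h') (-a * h' s ^ 2) s := by
  have := ((hder2.pow 2).div_const 2).add ((hasDerivAt_potential (b := b) hp (h s)).comp s hder1)
  refine this.congr_deriv ?_
  linear_combination (h' s) * heq

theorem tendsto_energy_atTop (hp : 0 ≤ p) {h h' : ℝ → ℝ}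
    (hlim : Tendsto h atTop (𝓝 0)) (hlim' : Tendsto h' atTop (𝓝 0)) :
    Tendsto (energy b p h h') atTop (𝓝 0) := by
  have hV := (hasDerivAt_potential (b := b) hp 0).continuousAt.tendsto.comp hlim
  show Tendsto (fun t => h' t ^ 2 / 2 + potential b p (h t)) atTop (𝓝 0)
  simpa [potential_zero hp] using ((hlim'.pow 2).div_const 2).add hV

theorem energy_nonpos (hp : 0 ≤ p) (ha : a ≤ 0) {h h' h'' : ℝ → ℝ}
    (hder1 : ∀ s ≥ (0 : ℝ), HasDerivAt h (h' s) s)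
    (hder2 : ∀ s ≥ (0 : ℝ), HasDerivAt h' (h'' s) s)
    (heq : ∀ s ≥ (0 : ℝ), h'' s + a * h' s - b * h s + |h s| ^ (2 * p) * h s = 0)
    (hlim : Tendsto h atTop (𝓝 0)) (hlim' : Tendsto h' atTop (𝓝 0)) {s : ℝ} (hs : 0 ≤ s) :
    energy b p h h' s ≤ 0 := by
  have hE : ∀ t ≥ (0 : ℝ), HasDerivAt (energy b p h h') (-a * h' t ^ 2) t :=
    fun t ht => hasDerivAt_energy hp (hder1 t ht) (hder2 t ht) (heq t ht)
  have hmono : MonotoneOn (energy b p h h') (Ici 0) := by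
    refine monotoneOn_of_hasDerivWithinAt_nonneg (f' := fun t => -a * h' t ^ 2) (convex_Ici 0)
      (fun t ht => (hE t ht).continuousAt.continuousWithinAt) (fun t ht => ?_)
      (fun t _ => mul_nonneg (neg_nonneg.mpr ha) (sq_nonneg _))
    rw [interior_Ici] at ht ⊢
    exact (hE t ht.le).hasDerivWithinAt
  refine ge_of_tendsto (tendsto_energy_atTop (b := b) hp hlim hlim') ?_
  filter_upwards [eventually_ge_atTop s] with t hst
  exact hmono hs (hs.trans hst) hst

end Energy

theorem abs_le_mul_norm_of_add_eq_zero {a b m M x y z : ℝ}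
    (heq : z + a * y - b * x + m * x = 0) (hm : |m| ≤ M) :
    |z| ≤ (|a| + |b| + M) * ‖(x, y)‖ := by
  have hx : |x| ≤ ‖(x, y)‖ := le_max_left _ _
  have hy : |y| ≤ ‖(x, y)‖ := le_max_right _ _
  calc |z| = |-(a * y) + b * x + -(m * x)| := congrArg abs (by linear_combination heq)
    _ ≤ |a| * |y| + |b| * |x| + |m| * |x| := by
        simpa only [abs_neg, abs_mul] using abs_add_three (-(a * y)) (b * x) (-(m * x))
    _ ≤ (|a| + |b| + M) * ‖(x, y)‖ := by
        nlinarith [abs_nonneg a, abs_nonneg b, abs_nonneg m, abs_nonneg x, abs_nonneg y]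

theorem eq_zero_of_abs_deriv2_le_mul_norm {h h' h'' : ℝ → ℝ} {C t₀ s : ℝ}
    (hder1 : ∀ t ∈ Icc t₀ s, HasDerivAt h (h' t) t)
    (hder2 : ∀ t ∈ Icc t₀ s, HasDerivAt h' (h'' t) t)
    (hbound : ∀ t ∈ Ico t₀ s, |h'' t| ≤ C * ‖(h t, h' t)‖)
    (h0 : h t₀ = 0) (h'0 : h' t₀ = 0) :
    ∀ t ∈ Icc t₀ s, h t = 0 := by
  have hderiv : ∀ t ∈ Icc t₀ s, HasDerivAt (fun t => (h t, h' t)) (h' t, h'' t) t :=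
    fun t ht => (hder1 t ht).prodMk (hder2 t ht)
  have hzero := eq_zero_of_abs_deriv_le_mul_abs_self_of_eq_zero_right (K := max 1 C)
    (fun t ht => (hderiv t ht).continuousAt.continuousWithinAt)
    (fun t ht => (hderiv t (Ico_subset_Icc_self ht)).hasDerivWithinAt)
    (by simp [h0, h'0]) (fun t ht => ?_)
  · exact fun t ht => congrArg Prod.fst (hzero t ht)
  · have hnorm := norm_nonneg (h t, h' t)
    refine max_le ?_ ?_
    · exact (le_max_right _ _).trans (le_mul_of_one_le_left hnorm (le_max_left _ _))
    · exact (hbound t ht).trans (mul_le_mul_of_nonneg_right (le_max_right _ _) hnorm)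

theorem stmt_2_general (d p : ℝ) (hp : 0 < p)
    (hsub : d - 2 - 2 / p ≤ 0)
    (h h' h'' : ℝ → ℝ)
    (hder1 : ∀ s ≥ (0:ℝ), HasDerivAt h (h' s) s)
    (hder2 : ∀ s ≥ (0:ℝ), HasDerivAt h' (h'' s) s)
    (heq : ∀ s ≥ (0:ℝ),
      h'' s + (d - 2 - 2 / p) * h' s - (1 / p) * (d - 2 - 1 / p) * h s
        + |h s| ^ (2 * p) * h s = 0)
    (h0 : h 0 = 0)
    (hlim : Filter.Tendsto h Filter.atTop (nhds 0))
    (hlim' : Filter.Tendsto h' Filter.atTop (nhds 0)) :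
    ∀ s ≥ (0:ℝ), h s = 0 := by
  have h'0 : h' 0 = 0 := by
    have hE0 := energy_nonpos hp.le hsub hder1 hder2 heq hlim hlim' le_rfl
    simp only [energy, h0, potential_zero hp.le, add_zero] at hE0
    nlinarith [sq_nonneg (h' 0)]
  intro s hs
  have hcont : ContinuousOn (fun t => |h t| ^ (2 * p)) (Icc 0 s) :=
    ((continuousOn_of_forall_continuousAt fun t ht => (hder1 t ht.1).continuousAt).abs).rpow_const
      fun _ _ => Or.inr (by positivity)
  obtain ⟨M, hM⟩ := isCompact_Icc.exists_bound_of_continuousOn hcont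
  exact eq_zero_of_abs_deriv2_le_mul_norm (fun t ht => hder1 t ht.1) (fun t ht => hder2 t ht.1)
    (fun t ht => abs_le_mul_norm_of_add_eq_zero (heq t ht.1)
      (by simpa only [Real.norm_eq_abs] using hM t (Ico_subset_Icc_self ht)))
    h0 h'0 s ⟨hs, le_rfl⟩

/-- Nonexistence of nontrivial finite-energy static solutions in the critical and
subcritical cases `d - 2 - 2/p ≤ 0`. -/
theorem stmt_2 (d p : ℝ) (hd : 3 ≤ d) (hp : 0 < p)
    (hsub : d - 2 - 2 / p ≤ 0) (hpos : 0 < d - 2 - 1 / p)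
    (h h' h'' : ℝ → ℝ)
    (hder1 : ∀ s ≥ (0:ℝ), HasDerivAt h (h' s) s)
    (hder2 : ∀ s ≥ (0:ℝ), HasDerivAt h' (h'' s) s)
    (hcont : ContinuousOn h'' (Set.Ici 0))
    (heq : ∀ s ≥ (0:ℝ),
      h'' s + (d - 2 - 2 / p) * h' s - (1 / p) * (d - 2 - 1 / p) * h s
        + |h s| ^ (2 * p) * h s = 0)
    (h0 : h 0 = 0)
    (hlim : Filter.Tendsto h Filter.atTop (nhds 0))
    (hlim' : Filter.Tendsto h' Filter.atTop (nhds 0))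
    (hint : IntegrableOn (fun s => h' s ^ 2) (Set.Ici 0)) :
    ∀ s ≥ (0:ℝ), h s = 0 :=
  stmt_2_general d p hp hsub h h' h'' hder1 hder2 heq h0 hlim hlim'
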